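/- arXiv:1112.4800 — 2 statements merged into one kernel-verified Lean document; each statement's English description precedes it below -/
import Mathlib

section
/- Let (ξ_σ)_{σ<ω₁} be a strictly increasing family of countable ordinals indexed by the countable ordinals, and set ξ_{ω₁} = ω₁. Then there exists a linear isometry U : C([0,ω₁]) → C([0,ω₁]) such that U(1_{[0,σ]}) = 1_{[0,ξ_σ]} for every ordinal σ ≤ ω₁, and the range of U equals the closed linear span of {1_{[0,ξ_σ]} : σ ≤ ω₁} in C([0,ω₁]); moreover U is the unique bounded linear map with these prescribed values. -/
/-!
Put `φ α = min {σ ≤ ω₁ | α ≤ ξ σ}`. Since `ξ` is strictly increasing on `[0, ω₁]` and fixes `ω₁`,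
`φ` is its lower adjoint on the well-order `[0, ω₁]`: `φ α ≤ σ ↔ α ≤ ξ σ`. Hence
`φ⁻¹' [0, σ] = [0, ξ σ]` is clopen, so `φ` is continuous, and `φ (ξ σ) = σ`, so `φ` is onto.
Composition with `φ` is then a linear isometry `U` with `U 1_{[0,σ]} = 1_{[0,ξ σ]}`.
The indicators `1_{[0,σ]}` contain `1`, are closed under products and separate points, so by
Stone–Weierstrass they span a dense subspace; this gives both the range of `U` (an isometry on a
Banach space has closed range) and uniqueness.
-/

set_option synthInstance.maxHeartbeats 1000000
set_option maxHeartbeats 2000000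

noncomputable section
open Set Ordinal

abbrev omega1 : Ordinal.{0} := Ordinal.omega 1

instance (o : Ordinal) : CompactSpace (Set.Iic o) := by
  have h : IsCompact (Set.Iic o) := by
    have := isCompact_Icc (a := (⊥ : Ordinal)) (b := o)
    rwa [Set.Icc_bot] at this
  exact isCompact_iff_compactSpace.mp h

/-- The Banach space `C([0, ω₁])` of continuous real-valued functions on `[0, ω₁]`,
with the supremum norm. -/
abbrev CC := C(Set.Iic omega1, ℝ)

theorem isClopen_le (o σ : Ordinal) : IsClopen {α : Set.Iic o | (α : Ordinal) ≤ σ} := by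
  constructor
  · exact isClosed_Iic.preimage continuous_subtype_val
  · have : {α : Set.Iic o | (α : Ordinal) ≤ σ}
        = (Subtype.val) ⁻¹' (Set.Iio (Order.succ σ)) := by
      ext α; simp [Order.lt_succ_iff]
    rw [this]
    exact isOpen_Iio.preimage continuous_subtype_val

/-- The indicator function `1_{[0,σ]}` as an element of `C([0, ω₁])`. -/
def indic (σ : Ordinal) : CC :=
  letI : ∀ j : Set.Iic omega1, Decidable (j ∈ {α : Set.Iic omega1 | (α : Ordinal) ≤ σ}) :=
    fun _ => Classical.dec _
  ⟨({α : Set.Iic omega1 | (α : Ordinal) ≤ σ}).piecewise (fun _ => (1 : ℝ)) (fun _ => 0),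
    Continuous.piecewise
      (fun a ha => by
        rw [(isClopen_le omega1 σ).frontier_eq] at ha
        exact absurd ha (Set.notMem_empty a))
      continuous_const continuous_const⟩

theorem indic_apply (σ : Ordinal) (α : Set.Iic omega1) :
    indic σ α = if (α : Ordinal) ≤ σ then 1 else 0 := by
  simp [indic, Set.piecewise]

theorem indic_mul (σ τ : Ordinal) : indic σ * indic τ = indic (min σ τ) := by
  ext α
  simp only [ContinuousMap.mul_apply, indic_apply, le_min_iff]
  split_ifs <;> simp_all

theorem indic_omega1 : indic omega1 = 1 := by
  ext α
  simp [indic_apply, show (α : Ordinal) ≤ omega1 from α.2]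

theorem indic_comp {φ : C(Set.Iic omega1, Set.Iic omega1)} {σ τ : Ordinal}
    (h : ∀ α, (φ α : Ordinal) ≤ σ ↔ (α : Ordinal) ≤ τ) : (indic σ).comp φ = indic τ := by
  ext α
  simp only [ContinuousMap.comp_apply, indic_apply, h]

namespace ContinuousMap

variable {X Y : Type*} [TopologicalSpace X] [CompactSpace X]

theorem dense_span_of_separatesPoints {S : Set C(X, ℝ)} (h_one : 1 ∈ S)
    (h_mul : ∀ f ∈ S, ∀ g ∈ S, f * g ∈ S) (h_sep : Set.SeparatesPoints ((⇑) '' S)) :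
    Dense (Submodule.span ℝ S : Set C(X, ℝ)) := by
  let M : Submonoid C(X, ℝ) := ⟨⟨S, fun hf hg => h_mul _ hf _ hg⟩, h_one⟩
  have h_span : Subalgebra.toSubmodule (Algebra.adjoin ℝ S) = Submodule.span ℝ S :=
    Algebra.adjoin_eq_span_of_subset ℝ fun f hf =>
      Submodule.subset_span ((Submonoid.closure_le (S := M)).2 subset_rfl hf)
  have h_top := subalgebra_topologicalClosure_eq_top_of_separatesPoints (Algebra.adjoin ℝ S)
    (Set.separatesPoints_mono (Set.image_mono Algebra.subset_adjoin) h_sep)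
  rw [dense_iff_closure_eq, ← h_span, Subalgebra.coe_toSubmodule,
    ← Subalgebra.topologicalClosure_coe, h_top]
  rfl

variable [TopologicalSpace Y] [CompactSpace Y]

theorem norm_comp_of_surjective {E : Type*} [SeminormedAddCommGroup E] (f : C(Y, E))
    {φ : C(X, Y)} (hφ : Function.Surjective φ) : ‖f.comp φ‖ = ‖f‖ := by
  refine le_antisymm ((norm_le _ (norm_nonneg f)).2 fun x => f.norm_coe_le_norm (φ x))
    ((norm_le _ (norm_nonneg _)).2 fun y => ?_)
  obtain ⟨x, rfl⟩ := hφ y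
  exact (f.comp φ).norm_coe_le_norm x

def compRightₗᵢ (φ : C(X, Y)) (hφ : Function.Surjective φ) : C(Y, ℝ) →ₗᵢ[ℝ] C(X, ℝ) :=
  ⟨(compRightAlgHom ℝ ℝ φ).toLinearMap, fun f => norm_comp_of_surjective f hφ⟩

end ContinuousMap

theorem dense_span_indic :
    Dense (Submodule.span ℝ {g : CC | ∃ σ ≤ omega1, g = indic σ} : Set CC) := by
  refine ContinuousMap.dense_span_of_separatesPoints ⟨omega1, le_rfl, indic_omega1.symm⟩ ?_ ?_
  · rintro _ ⟨σ, hσ, rfl⟩ _ ⟨τ, -, rfl⟩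
    exact ⟨min σ τ, (min_le_left _ _).trans hσ, indic_mul σ τ⟩
  · intro α β hαβ
    rcases lt_or_gt_of_ne (Subtype.coe_ne_coe.2 hαβ) with hlt | hlt
    · exact ⟨_, ⟨indic α, ⟨α, α.2, rfl⟩, rfl⟩, by simp [indic_apply, hlt.not_ge]⟩
    · exact ⟨_, ⟨indic β, ⟨β, β.2, rfl⟩, rfl⟩, by simp [indic_apply, hlt.not_ge]⟩

theorem exists_galoisConnection_of_wellFoundedLT {α β : Type*} [LinearOrder α] [WellFoundedLT α]
    [Preorder β] {u : α → β} (hu : Monotone u) (h_cofinal : ∀ b, ∃ a, b ≤ u a) :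
    ∃ l : β → α, GaloisConnection l u :=
  ⟨fun b => wellFounded_lt.min {a | b ≤ u a} (h_cofinal b), fun b _ =>
    ⟨fun h => (wellFounded_lt.min_mem {a | b ≤ u a} _).trans (hu h),
      fun h => not_lt.1 (wellFounded_lt.not_lt_min {a | b ≤ u a} h)⟩⟩

theorem continuous_of_isClopen_preimage_Iic {X Y : Type*} [TopologicalSpace X]
    [TopologicalSpace Y] [LinearOrder Y] [OrderTopology Y] {f : X → Y}
    (hf : ∀ y, IsClopen (f ⁻¹' Set.Iic y)) : Continuous f := by
  rw [OrderTopology.topology_eq_generate_intervals (α := Y), continuous_generateFrom_iff]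
  rintro s ⟨a, rfl | rfl⟩
  · rw [← compl_Iic, preimage_compl]
    exact (hf a).isClosed.isOpen_compl
  · have h_Iio : f ⁻¹' Set.Iio a = ⋃ b ∈ Set.Iio a, f ⁻¹' Set.Iic b := by
      ext x
      simpa using ⟨fun h => ⟨f x, h, le_rfl⟩, fun ⟨b, hb, hxb⟩ => hxb.trans_lt hb⟩
    rw [h_Iio]
    exact isOpen_biUnion fun b _ => (hf b).isOpen

theorem exists_continuous_surjective_galoisConnection {α : Type*} [LinearOrder α] [OrderTop α]
    [WellFoundedLT α] [TopologicalSpace α] [OrderTopology α] (h_Iic : ∀ a : α, IsOpen (Set.Iic a))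
    {u : α → α} (hu : StrictMono u) (hu_top : u ⊤ = ⊤) :
    ∃ l : C(α, α), Function.Surjective l ∧ GaloisConnection l u := by
  obtain ⟨l, gc⟩ := exists_galoisConnection_of_wellFoundedLT hu.monotone
    fun b => ⟨⊤, le_top.trans_eq hu_top.symm⟩
  have h_preimage : ∀ a, l ⁻¹' Set.Iic a = Set.Iic (u a) := fun a => Set.ext fun b => gc b a
  refine ⟨⟨l, continuous_of_isClopen_preimage_Iic fun a => ?_⟩,
    fun a => ⟨u a, hu.injective (gc.u_l_u_eq_u a)⟩, gc⟩
  rw [h_preimage]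
  exact ⟨isClosed_Iic, h_Iic _⟩

theorem LinearIsometry.range_eq_closure_span_image {𝕜 E F : Type*} [NormedField 𝕜]
    [NormedAddCommGroup E] [CompleteSpace E] [NormedSpace 𝕜 E] [NormedAddCommGroup F]
    [NormedSpace 𝕜 F] (U : E →ₗᵢ[𝕜] F) {S : Set E} (hS : Dense (Submodule.span 𝕜 S : Set E)) :
    (LinearMap.range U.toLinearMap : Set F) = closure (Submodule.span 𝕜 (U '' S)) := by
  rw [← U.coe_toLinearMap, Submodule.span_image, Submodule.map_coe, U.coe_toLinearMap,
    U.isometry.isClosedEmbedding.closure_image_eq, hS.closure_eq, Set.image_univ,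
    LinearMap.coe_range, U.coe_toLinearMap]

/-- Given a strictly increasing family `(ξ_σ)_{σ<ω₁}` of countable ordinals with `ξ_{ω₁} = ω₁`,
there is a unique bounded linear map `U` on `C([0,ω₁])` with `U 1_{[0,σ]} = 1_{[0,ξ_σ]}` for all
`σ ≤ ω₁`; it is an isometry and its range is the closed linear span of the `1_{[0,ξ_σ]}`. -/
theorem exists_isometry_indicator (ξ : Ordinal → Ordinal)
    (hcount : ∀ σ < omega1, ξ σ < omega1)
    (hmono : ∀ σ τ : Ordinal, σ < τ → τ < omega1 → ξ σ < ξ τ)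
    (htop : ξ omega1 = omega1) :
    ∃ U : CC →L[ℝ] CC,
      (∀ f : CC, ‖U f‖ = ‖f‖) ∧
      (∀ σ ≤ omega1, U (indic σ) = indic (ξ σ)) ∧
      (LinearMap.range (U : CC →ₗ[ℝ] CC) : Set CC)
        = closure (Submodule.span ℝ {g : CC | ∃ σ ≤ omega1, g = indic (ξ σ)} : Set CC) ∧
      (∀ V : CC →L[ℝ] CC, (∀ σ ≤ omega1, V (indic σ) = indic (ξ σ)) → V = U) := by
  have h_maps : Set.MapsTo ξ (Set.Iic omega1) (Set.Iic omega1) := fun σ hσ =>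
    hσ.lt_or_eq.elim (fun h => (hcount σ h).le) fun h => (congrArg ξ h).trans_le htop.le
  have h_strict : StrictMono (h_maps.restrict ξ _ _) := fun σ τ hστ => by
    change ξ σ < ξ τ
    rcases (Set.mem_Iic.1 τ.2).lt_or_eq with hτ | hτ
    · exact hmono σ τ hστ hτ
    · rw [hτ, htop]
      exact hcount σ (lt_of_lt_of_eq hστ hτ)
  obtain ⟨φ, hφ, gc⟩ := exists_continuous_surjective_galoisConnection
    (fun σ : Set.Iic omega1 => (isClopen_le omega1 σ).isOpen) h_strict (Subtype.ext htop)
  let U := ContinuousMap.compRightₗᵢ φ hφ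
  have hU : ∀ σ ≤ omega1, U (indic σ) = indic (ξ σ) := fun σ hσ =>
    indic_comp fun α => gc α ⟨σ, hσ⟩
  have h_image : U '' {g | ∃ σ ≤ omega1, g = indic σ} = {g | ∃ σ ≤ omega1, g = indic (ξ σ)} := by
    ext g
    constructor
    · rintro ⟨_, ⟨σ, hσ, rfl⟩, rfl⟩
      exact ⟨σ, hσ, hU σ hσ⟩
    · rintro ⟨σ, hσ, rfl⟩
      exact ⟨indic σ, ⟨σ, hσ, rfl⟩, hU σ hσ⟩
  refine ⟨U.toContinuousLinearMap, U.norm_map, hU, ?_, fun V hV => ?_⟩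
  · rw [← h_image]
    exact U.range_eq_closure_span_image dense_span_indic
  · refine ContinuousLinearMap.ext_on dense_span_indic ?_
    rintro _ ⟨σ, hσ, rfl⟩
    exact (hV σ hσ).trans (hU σ hσ).symm
end
end

section
/- Every closed linear subspace X of C([0,ω₁]) that is isomorphic to c₀ (i.e., there is a continuous linear bijection X → c₀ with continuous inverse) is complemented in C([0,ω₁]): there exists a bounded linear projection of C([0,ω₁]) onto X. -/
set_option synthInstance.maxHeartbeats 1000000
set_option maxHeartbeats 2000000

noncomputable section
open Set Ordinal

/-- Type synonym endowing an arbitrary type with the discrete topology. -/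
def DiscType (Γ : Type*) : Type _ := Γ
instance (Γ : Type*) : TopologicalSpace (DiscType Γ) := ⊥
instance (Γ : Type*) : DiscreteTopology (DiscType Γ) := ⟨rfl⟩

/-- `c₀(Γ)`: the Banach space of real-valued functions on `Γ` vanishing at infinity,
i.e. `{γ : |f γ| ≥ ε}` is finite for every `ε > 0`, with the supremum norm. -/
abbrev czero (Γ : Type*) := ZeroAtInftyContinuousMap (DiscType Γ) ℝ

/-- The set `[0, ω₁)` of countable ordinals, the index set of `c₀(ω₁)`. -/
abbrev Gamma1 : Type 1 := {α : Ordinal.{0} // α < omega1}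

/-!
Sobczyk's theorem: an operator from a subspace `X` of a separable normed space into `c₀` extends
to the whole space. Hahn–Banach extensions `φₙ` of the coordinate functionals are uniformly
bounded and tend weak* to `0` on `X`. In the weak*-compact, metrizable dual ball, let `ψₙ` be a
point of the annihilator of `X` nearest to `φₙ`; every cluster point `(g, h)` of `(φₙ, ψₙ)` has
`g` in the annihilator, hence `g = h`, so `φₙ - ψₙ → 0` weak* and `z ↦ (φₙ z - ψₙ z)ₙ` is the
extension.

`C([0, ω₁])` is not separable, but every continuous function on `[0, ω₁]` is constant on a tail
`[α, ω₁]` with `α` countable, and since `X ≅ c₀` is separable one `α` serves all of `X`. The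
retraction `x ↦ min x α` then factors the identity of `X` through the separable space `C([0, α])`,
where Sobczyk's theorem extends the isomorphism `X ≃ c₀`; composing the extension with its inverse
is the projection.
-/

open Filter Topology TopologicalSpace

namespace czero

theorem tendsto_atTop (f : czero ℕ) : Tendsto (fun n : ℕ => f n) atTop (𝓝 0) := by
  have h := ZeroAtInftyContinuousMapClass.zero_at_infty f
  rw [cocompact_eq_cofinite] at h
  exact Nat.cofinite_eq_atTop ▸ h

def ofTendsto (g : ℕ → ℝ) (hg : Tendsto g atTop (𝓝 0)) : czero ℕ where
  toFun := g
  continuous_toFun := continuous_of_discreteTopology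
  zero_at_infty' := by
    rw [cocompact_eq_cofinite]
    exact Nat.cofinite_eq_atTop ▸ hg

@[simp]
theorem ofTendsto_apply (g : ℕ → ℝ) (hg : Tendsto g atTop (𝓝 0)) (n : ℕ) :
    ofTendsto g hg n = g n := rfl

@[simp]
theorem add_apply (f g : czero ℕ) (n : ℕ) : (f + g) n = f n + g n := rfl

@[simp]
theorem sub_apply (f g : czero ℕ) (n : ℕ) : (f - g) n = f n - g n := rfl

@[simp]
theorem smul_apply (c : ℝ) (f : czero ℕ) (n : ℕ) : (c • f) n = c * f n := rfl

theorem abs_apply_le_norm (f : czero ℕ) (n : ℕ) : |f n| ≤ ‖f‖ := by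
  have h := BoundedContinuousFunction.norm_coe_le_norm f.toBCF n
  rwa [ZeroAtInftyContinuousMap.norm_toBCF_eq_norm, Real.norm_eq_abs] at h

theorem norm_le_of_forall_abs_le (f : czero ℕ) {M : ℝ} (hM : 0 ≤ M) (h : ∀ n : ℕ, |f n| ≤ M) :
    ‖f‖ ≤ M := by
  rw [← ZeroAtInftyContinuousMap.norm_toBCF_eq_norm]
  exact (BoundedContinuousFunction.norm_le hM).2 fun n => by simpa [Real.norm_eq_abs] using h n

def evalCLM (n : ℕ) : czero ℕ →L[ℝ] ℝ :=
  LinearMap.mkContinuous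
    { toFun := fun f => f n
      map_add' := fun _ _ => rfl
      map_smul' := fun _ _ => rfl }
    1 fun f => by simpa [Real.norm_eq_abs] using abs_apply_le_norm f n

@[simp]
theorem evalCLM_apply (n : ℕ) (f : czero ℕ) : evalCLM n f = f n := rfl

theorem norm_evalCLM_le (n : ℕ) : ‖evalCLM n‖ ≤ 1 :=
  LinearMap.mkContinuous_norm_le _ zero_le_one _

def ofFin (N : ℕ) : (Fin N → ℝ) →ₗ[ℝ] czero ℕ where
  toFun v := ofTendsto (fun n => if h : n < N then v ⟨n, h⟩ else 0) <|
    tendsto_const_nhds.congr' <| eventually_atTop.2 ⟨N, fun n hn => by simp [not_lt.2 hn]⟩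
  map_add' v w := by
    ext (n : ℕ)
    simp only [add_apply, ofTendsto_apply]
    split_ifs <;> simp
  map_smul' c v := by
    ext (n : ℕ)
    simp only [smul_apply, ofTendsto_apply]
    split_ifs <;> simp

theorem ofFin_apply (N : ℕ) (v : Fin N → ℝ) (n : ℕ) :
    ofFin N v n = if h : n < N then v ⟨n, h⟩ else 0 := rfl

theorem dist_ofFin_le {f : czero ℕ} {N : ℕ} {ε : ℝ} (hε : 0 ≤ ε)
    (hN : ∀ n, N ≤ n → |f n| ≤ ε) : dist f (ofFin N fun i => f (i : ℕ)) ≤ ε := by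
  rw [dist_eq_norm]
  refine norm_le_of_forall_abs_le _ hε fun n => ?_
  rw [sub_apply, ofFin_apply]
  split_ifs with h
  · simpa using hε
  · simpa using hN n (not_lt.1 h)

instance : SeparableSpace (czero ℕ) := by
  refine isSeparable_univ_iff.1 <| (isSeparable_iUnion.2 fun N =>
    isSeparable_range (ofFin N).continuous_of_finiteDimensional).closure.mono fun f _ => ?_
  refine Metric.mem_closure_iff.2 fun ε hε => ?_
  obtain ⟨N, hN⟩ := eventually_atTop.1 <|
    (tendsto_atTop f).eventually (Metric.closedBall_mem_nhds 0 (half_pos hε))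
  refine ⟨_, mem_iUnion.2 ⟨N, mem_range_self _⟩,
    (dist_ofFin_le (half_pos hε).le fun n hn => ?_).trans_lt (half_lt_self hε)⟩
  simpa using hN n hn

end czero

section Sobczyk

variable {E : Type*} [NormedAddCommGroup E] [NormedSpace ℝ E]

def czero.mkCLM (φ : ℕ → StrongDual ℝ E) {C : ℝ} (hC : ∀ n, ‖φ n‖ ≤ C)
    (hφ : ∀ z, Tendsto (fun n => φ n z) atTop (𝓝 0)) : E →L[ℝ] czero ℕ :=
  LinearMap.mkContinuous
    { toFun := fun z => ofTendsto (fun n => φ n z) (hφ z)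
      map_add' := fun y z => by ext (n : ℕ); simp
      map_smul' := fun c z => by ext (n : ℕ); simp }
    C fun z => by
      refine norm_le_of_forall_abs_le _
        (mul_nonneg ((norm_nonneg _).trans (hC 0)) (norm_nonneg z)) fun n => ?_
      simpa using (φ n).le_of_opNorm_le (hC n) z

@[simp]
theorem czero.mkCLM_apply (φ : ℕ → StrongDual ℝ E) {C : ℝ} (hC : ∀ n, ‖φ n‖ ≤ C)
    (hφ : ∀ z, Tendsto (fun n => φ n z) atTop (𝓝 0)) (z : E) (n : ℕ) :
    czero.mkCLM φ hC hφ z n = φ n z := rfl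

theorem StrongDual.exists_vanishing_on_tendsto_sub [SeparableSpace E] (X : Submodule ℝ E)
    (φ : ℕ → StrongDual ℝ E) {C : ℝ} (hC : ∀ n, ‖φ n‖ ≤ C)
    (hX : ∀ x ∈ X, Tendsto (fun n => φ n x) atTop (𝓝 0)) :
    ∃ ψ : ℕ → StrongDual ℝ E, (∀ n, ‖ψ n‖ ≤ C) ∧ (∀ n, ∀ x ∈ X, ψ n x = 0) ∧
      ∀ z, Tendsto (fun n => φ n z - ψ n z) atTop (𝓝 0) := by
  set B : Set (WeakDual ℝ E) := WeakDual.toStrongDual ⁻¹' Metric.closedBall 0 C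
  have hB : IsCompact B := WeakDual.isCompact_closedBall 0 C
  have : CompactSpace B := isCompact_iff_compactSpace.mp hB
  have := WeakDual.metrizable_of_isCompact ℝ E B hB
  let _ : MetricSpace B := metrizableSpaceMetric B
  have heval (z : E) : Continuous fun g : B => (g : WeakDual ℝ E) z :=
    (WeakDual.eval_continuous z).comp continuous_subtype_val
  set K : Set B := {g | ∀ x ∈ X, (g : WeakDual ℝ E) x = 0}
  have hK : IsClosed K := by
    simp only [K, ofPred_forall]
    exact isClosed_iInter fun x => isClosed_iInter fun _ => isClosed_eq (heval x) continuous_const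
  have hK0 : K.Nonempty :=
    ⟨⟨0, by simpa [B] using (norm_nonneg (φ 0)).trans (hC 0)⟩, fun _ _ => rfl⟩
  let a (n : ℕ) : B := ⟨StrongDual.toWeakDual (φ n), by simpa [B] using hC n⟩
  choose b hbK hb using fun n => hK.isCompact.exists_infDist_eq_dist hK0 (a n)
  refine ⟨fun n => WeakDual.toStrongDual (b n : WeakDual ℝ E),
    fun n => mem_closedBall_zero_iff.1 (b n).2, hbK,
    fun z => tendsto_of_subseq_tendsto fun ns hns => ?_⟩
  obtain ⟨⟨g, h⟩, ms, hms, hlim⟩ := CompactSpace.tendsto_subseq fun n => (a (ns n), b (ns n))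
  have ha : Tendsto (fun n => a (ns (ms n))) atTop (𝓝 g) := (continuous_fst.tendsto _).comp hlim
  have hb' : Tendsto (fun n => b (ns (ms n))) atTop (𝓝 h) := (continuous_snd.tendsto _).comp hlim
  have hgK : g ∈ K := fun x hx => tendsto_nhds_unique (((heval x).tendsto g).comp ha)
    ((hX x hx).comp (hns.comp hms.tendsto_atTop))
  have hgh : g = h := by
    refine dist_le_zero.1 (le_of_tendsto_of_tendsto ((continuous_dist.tendsto (g, h)).comp hlim)
      (dist_self g ▸ ha.dist tendsto_const_nhds) (Eventually.of_forall fun n => ?_))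
    exact (hb _).symm.trans_le (Metric.infDist_le_dist_of_mem hgK)
  subst hgh
  refine ⟨ms, ?_⟩
  simpa [a] using (((heval z).tendsto g).comp ha).sub (((heval z).tendsto g).comp hb')

theorem exists_extension_to_czero [SeparableSpace E] (X : Submodule ℝ E)
    (T : X →L[ℝ] czero ℕ) : ∃ Q : E →L[ℝ] czero ℕ, ∀ x : X, Q x = T x := by
  choose φ hφ hφT using fun n => exists_extension_norm_eq X ((czero.evalCLM n).comp T)
  have hC (n : ℕ) : ‖φ n‖ ≤ ‖T‖ := by
    simpa [hφT] using (ContinuousLinearMap.opNorm_comp_le _ _).trans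
      (mul_le_of_le_one_left (norm_nonneg T) (czero.norm_evalCLM_le n))
  obtain ⟨ψ, hψC, hψX, hlim⟩ := StrongDual.exists_vanishing_on_tendsto_sub X φ hC
    fun x hx => (czero.tendsto_atTop (T ⟨x, hx⟩)).congr fun n => (hφ n ⟨x, hx⟩).symm
  refine ⟨czero.mkCLM (fun n => φ n - ψ n)
    (fun n => (norm_sub_le _ _).trans (add_le_add (hC n) (hψC n))) hlim, fun x => ?_⟩
  ext (n : ℕ)
  simp [hφ, hψX n x x.2]

theorem exists_extension_to_czero_of_retract {F : Type*} [NormedAddCommGroup F]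
    [NormedSpace ℝ F] [SeparableSpace F] (r : E →L[ℝ] F) (e : F →L[ℝ] E)
    {X : Submodule ℝ E} (hX : ∀ x ∈ X, e (r x) = x) (T : X →L[ℝ] czero ℕ) :
    ∃ Q : E →L[ℝ] czero ℕ, ∀ x : X, Q x = T x := by
  let X' := X.comap (e : F →ₗ[ℝ] E)
  obtain ⟨Q, hQ⟩ := exists_extension_to_czero X'
    (T.comp ((e.comp X'.subtypeL).codRestrict X fun y => y.2))
  refine ⟨Q.comp r, fun x => ?_⟩
  have hx : r x ∈ X' := by simp [X', hX x x.2]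
  rw [ContinuousLinearMap.comp_apply, hQ ⟨r x, hx⟩, ContinuousLinearMap.comp_apply]
  exact congrArg T (Subtype.ext (hX x x.2))

end Sobczyk

theorem Ordinal.countable_Iic_of_lt_omega_one {a : Ordinal} (ha : a < ω₁) :
    Countable (Iic a) := by
  rw [← Order.Iio_succ, countable_coe_iff, ← Cardinal.le_aleph0_iff_set_countable,
    Cardinal.mk_Iio_ordinal, Cardinal.lift_le_aleph0, ← Cardinal.lt_aleph_one_iff,
    ← Cardinal.lt_omega_iff_card_lt]
  exact (Cardinal.isSuccLimit_omega 1).succ_lt ha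

section EventuallyConstant

variable {Y : Type*} [MetricSpace Y]

theorem ContinuousMap.exists_lt_omega1_forall_ge_eq_top (f : C(Iic omega1, Y)) :
    ∃ β < omega1, ∀ x : Iic omega1, β ≤ x.1 → f x = f ⊤ := by
  have hne : ∃ l : Iic omega1, l < ⊤ := ⟨⊥, Subtype.coe_lt_coe.1 (omega_pos 1)⟩
  choose l hl hball using fun n : ℕ => exists_Ioc_subset_of_mem_nhds
    (f.continuous.continuousAt.preimage_mem_nhds (Metric.ball_mem_nhds (f ⊤) n.one_div_pos_of_nat))
    hne
  refine ⟨Order.succ (⨆ n, (l n).1), (Cardinal.isSuccLimit_omega 1).succ_lt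
    (iSup_lt_omega_one fun n => Subtype.coe_lt_coe.2 (hl n)), fun x hx => ?_⟩
  refine eq_of_forall_dist_le fun ε hε => ?_
  obtain ⟨n, hn⟩ := exists_nat_one_div_lt hε
  have hlx : l n < x := Subtype.coe_lt_coe.1 <|
    (le_ciSup bddAbove_of_small n).trans_lt ((Order.lt_succ _).trans_le hx)
  exact (hball n ⟨hlx, le_top⟩).le.trans hn.le

theorem TopologicalSpace.IsSeparable.exists_lt_omega1_forall_ge_eq_top
    {S : Set C(Iic omega1, Y)} (hS : IsSeparable S) :
    ∃ α < omega1, ∀ f ∈ S, ∀ x : Iic omega1, α ≤ x.1 → f x = f ⊤ := by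
  obtain ⟨D, hD, hSD⟩ := hS
  have := hD.to_subtype
  choose β hβ hβf using fun f : D => (f : C(Iic omega1, Y)).exists_lt_omega1_forall_ge_eq_top
  refine ⟨⨆ f, β f, iSup_lt_omega_one hβ, fun f hf => ?_⟩
  have hclosed :
      IsClosed {f : C(Iic omega1, Y) | ∀ x : Iic omega1, ⨆ f, β f ≤ x.1 → f x = f ⊤} := by
    simp only [ofPred_forall]
    exact isClosed_iInter fun x => isClosed_iInter fun _ =>
      isClosed_eq (continuous_eval_const x) (continuous_eval_const ⊤)
  exact hclosed.closure_subset_iff.2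
    (fun g hg x hx => hβf ⟨g, hg⟩ x ((le_ciSup bddAbove_of_small _).trans hx)) (hSD hf)

end EventuallyConstant

theorem exists_extension_to_czero_of_isSeparable {X : Submodule ℝ CC}
    (hX : IsSeparable (X : Set CC)) (T : X →L[ℝ] czero ℕ) :
    ∃ Q : CC →L[ℝ] czero ℕ, ∀ x : X, Q x = T x := by
  obtain ⟨α, hα, hXα⟩ := hX.exists_lt_omega1_forall_ge_eq_top
  have := Ordinal.countable_Iic_of_lt_omega_one hα
  let incl : C(Iic α, Iic omega1) := ⟨inclusion (Iic_subset_Iic.2 hα.le), continuous_inclusion _⟩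
  let retr : C(Iic omega1, Iic α) := ⟨fun x => ⟨min x.1 α, mem_Iic.2 (min_le_right _ _)⟩,
    (continuous_subtype_val.min continuous_const).subtype_mk _⟩
  refine exists_extension_to_czero_of_retract (ContinuousMap.compCLM ℝ ℝ incl)
    (ContinuousMap.compCLM ℝ ℝ retr) (fun f hf => ?_) T
  ext x
  rcases le_total x.1 α with hx | hx
  · simp [incl, retr, min_eq_left hx]
  · simp [incl, retr, min_eq_right hx, hXα f hf x hx, hXα f hf ⟨α, hα.le⟩ le_rfl]

section Complemented

variable {R M : Type*} [Ring R] [TopologicalSpace M] [AddCommGroup M] [Module R M]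

theorem Submodule.closedComplemented_of_extension {F : Type*} [TopologicalSpace F]
    [AddCommGroup F] [Module R F] {X : Submodule R M} (T : X ≃L[R] F) (Q : M →L[R] F)
    (hQ : ∀ x : X, Q x = T x) : X.ClosedComplemented :=
  ⟨T.symm.toContinuousLinearMap.comp Q, fun x => by simp [hQ]⟩

theorem Submodule.ClosedComplemented.exists_idempotent_range_eq {p : Submodule R M}
    (h : p.ClosedComplemented) :
    ∃ P : M →L[R] M, P.comp P = P ∧ LinearMap.range (P : M →ₗ[R] M) = p := by
  obtain ⟨f, hf⟩ := h
  have hp := ContinuousLinearMap.isTopCompl_of_proj hf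
  exact ⟨p.projectionL _ hp, Submodule.isIdempotentElem_projectionL hp,
    Submodule.range_projectionL hp⟩

end Complemented

theorem c0_subspace_complemented_general (X : Submodule ℝ CC)
    (hiso : Nonempty (X ≃L[ℝ] czero ℕ)) :
    ∃ P : CC →L[ℝ] CC, P.comp P = P ∧ LinearMap.range (P : CC →ₗ[ℝ] CC) = X := by
  obtain ⟨T⟩ := hiso
  have hX : IsSeparable (X : Set CC) := by
    simpa [range_comp, T.symm.surjective.range_eq] using
      isSeparable_range (continuous_subtype_val.comp T.symm.continuous)
  obtain ⟨Q, hQ⟩ := exists_extension_to_czero_of_isSeparable hX T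
  exact (Submodule.closedComplemented_of_extension T Q hQ).exists_idempotent_range_eq

/-- Every closed subspace of `C([0,ω₁])` isomorphic to `c₀` is complemented in `C([0,ω₁])`. -/
theorem c0_subspace_complemented (X : Submodule ℝ CC) (hX : IsClosed (X : Set CC))
    (hiso : Nonempty (X ≃L[ℝ] czero ℕ)) :
    ∃ P : CC →L[ℝ] CC, P.comp P = P ∧ LinearMap.range (P : CC →ₗ[ℝ] CC) = X :=
  c0_subspace_complemented_general X hiso
end
end
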